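/- If M⁻¹A = I + E where the matrix E has rank k, then GMRES applied to M⁻¹Ax = M⁻¹b converges in at most k + 1 iterations; equivalently, there is a polynomial p of degree at most k + 1 with p(0) = 1 and p(M⁻¹A) = 0. -/
import Mathlib


open Matrix Polynomial

set_option synthInstance.maxHeartbeats 1000000 in
lemma aeval_apply_of_mem_range {n : ℕ} (f : (Fin n → ℂ) →ₗ[ℂ] (Fin n → ℂ))
    (h : ∀ x ∈ LinearMap.range f, f x ∈ LinearMap.range f)
    (p : Polynomial ℂ) (x : Fin n → ℂ) (hx : x ∈ LinearMap.range f) :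
    (Polynomial.aeval f p) x = ((Polynomial.aeval (f.restrict h) p) ⟨x, hx⟩ : Fin n → ℂ) := by
  induction p using Polynomial.induction_on' with
  | add p q hp hq =>
      simp only [_root_.map_add, LinearMap.add_apply, hp, hq, Submodule.coe_add]
  | monomial i a =>
      rw [← Polynomial.C_mul_X_pow_eq_monomial]
      simp only [_root_.map_mul, Polynomial.aeval_C, map_pow, Polynomial.aeval_X,
        Module.End.mul_apply, Module.algebraMap_end_apply, LinearMap.smul_apply,
        Submodule.coe_smul]
      congr 1
      rw [Module.End.pow_restrict i h, LinearMap.restrict_coe_apply]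

/-- If M⁻¹A = I + E with rank E = k, then there is a polynomial p of degree
at most k + 1 with p(0) = 1 annihilating M⁻¹A (GMRES converges in ≤ k+1 steps). -/
theorem gmres_low_rank_perturbation (n : ℕ) (A M E : Matrix (Fin n) (Fin n) ℂ)
    (hA : IsUnit A.det) (hM : IsUnit M.det) (k : ℕ)
    (hE : M⁻¹ * A = 1 + E) (hrank : E.rank = k) :
    ∃ p : Polynomial ℂ, p.degree ≤ (k + 1 : ℕ) ∧ p.eval 0 = 1 ∧
      Polynomial.aeval (M⁻¹ * A) p = 0 := by
  have hBu : IsUnit (M⁻¹ * A) := by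
    exact ((Matrix.isUnit_iff_isUnit_det _).2 (Matrix.isUnit_nonsing_inv_det M hM)).mul
      ((Matrix.isUnit_iff_isUnit_det _).2 hA)
  set f : (Fin n → ℂ) →ₗ[ℂ] (Fin n → ℂ) := E.mulVecLin with hfdef
  have hmem : ∀ x ∈ LinearMap.range f, f x ∈ LinearMap.range f :=
    fun x _ => LinearMap.mem_range_self f x
  set g := f.restrict hmem with hgdef
  set q := LinearMap.charpoly g with hqdef
  have hq0 : Polynomial.aeval g q = 0 := LinearMap.aeval_self_charpoly g
  have hqmonic : q.Monic := LinearMap.charpoly_monic g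
  have hqdeg : q.natDegree = k := by
    rw [hqdef, LinearMap.charpoly_natDegree]
    rw [Matrix.rank] at hrank
    exact hrank
  set m := q * Polynomial.X with hmdef
  have hmne : m ≠ 0 := (hqmonic.mul Polynomial.monic_X).ne_zero
  have hmf : Polynomial.aeval f m = 0 := by
    apply LinearMap.ext; intro v
    rw [hmdef, _root_.map_mul, Polynomial.aeval_X, Module.End.mul_apply]
    rw [aeval_apply_of_mem_range f hmem q (f v) (LinearMap.mem_range_self f v)]
    rw [← hgdef, hq0]
    rfl
  -- transfer to matrices
  have hmE : Polynomial.aeval E m = 0 := by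
    have h1 : Matrix.toLinAlgEquiv' (Polynomial.aeval E m)
        = Polynomial.aeval (Matrix.toLinAlgEquiv' E) m :=
      (Polynomial.aeval_algHom_apply (Matrix.toLinAlgEquiv' : Matrix (Fin n) (Fin n) ℂ ≃ₐ[ℂ] _).toAlgHom E m).symm
    have h2 : (Matrix.toLinAlgEquiv' E : (Fin n → ℂ) →ₗ[ℂ] (Fin n → ℂ)) = f := by
      ext v
      simp [Matrix.toLinAlgEquiv'_apply, hfdef]
    rw [h2, hmf] at h1
    exact Matrix.toLinAlgEquiv'.injective (by simpa using h1)
  -- strip off powers of (X + 1)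
  set j := m.rootMultiplicity (-1) with hjdef
  set r := m /ₘ ((Polynomial.X - Polynomial.C (-1)) ^ j) with hrdef
  have hfac : (Polynomial.X - Polynomial.C (-1)) ^ j * r = m :=
    Polynomial.pow_mul_divByMonic_rootMultiplicity_eq m (-1)
  have hrne : r.eval (-1) ≠ 0 :=
    Polynomial.eval_divByMonic_pow_rootMultiplicity_ne_zero (-1) hmne
  have hrE : Polynomial.aeval E r = 0 := by
    have h3 : (M⁻¹ * A) ^ j * Polynomial.aeval E r = 0 := by
      have := congrArg (Polynomial.aeval E) hfac
      rw [_root_.map_mul, map_pow, map_sub, Polynomial.aeval_X, Polynomial.aeval_C, hmE] at this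
      have h4 : E - (algebraMap ℂ (Matrix (Fin n) (Fin n) ℂ)) (-1) = M⁻¹ * A := by
        rw [hE, _root_.map_neg, _root_.map_one, sub_neg_eq_add, add_comm]
      rw [h4] at this
      exact this
    have hu := hBu.pow j
    obtain ⟨u, hu⟩ := hu
    calc Polynomial.aeval E r = (↑u⁻¹ : Matrix (Fin n) (Fin n) ℂ) * ((M⁻¹ * A) ^ j * Polynomial.aeval E r) := by
          rw [← hu, ← mul_assoc, Units.inv_mul, one_mul]
      _ = 0 := by rw [h3, mul_zero]
  -- build the final polynomial
  refine ⟨Polynomial.C (r.eval (-1))⁻¹ * r.comp (Polynomial.X - Polynomial.C 1), ?_, ?_, ?_⟩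
  · refine Polynomial.degree_le_natDegree.trans ?_
    have h5 : (Polynomial.C (r.eval (-1))⁻¹ * r.comp (Polynomial.X - Polynomial.C 1)).natDegree
        ≤ k + 1 := by
      refine (Polynomial.natDegree_C_mul_le _ _).trans ?_
      rw [Polynomial.natDegree_comp, Polynomial.natDegree_X_sub_C, mul_one]
      have h6 : r.natDegree ≤ m.natDegree :=
        Polynomial.natDegree_le_natDegree (Polynomial.degree_divByMonic_le _ _)
      refine h6.trans ?_
      rw [hmdef, Polynomial.natDegree_mul_X hqmonic.ne_zero, hqdeg]
    exact_mod_cast h5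
  · rw [Polynomial.eval_mul, Polynomial.eval_C, Polynomial.eval_comp]
    simp only [Polynomial.eval_sub, Polynomial.eval_X, Polynomial.eval_C, zero_sub]
    exact inv_mul_cancel₀ hrne
  · rw [_root_.map_mul, Polynomial.aeval_comp]
    have h7 : Polynomial.aeval (M⁻¹ * A) (Polynomial.X - Polynomial.C 1 : Polynomial ℂ) = E := by
      simp only [map_sub, Polynomial.aeval_X, Polynomial.aeval_C, _root_.map_one, hE]
      abel
    rw [h7, hrE, mul_zero]
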